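/- Let Γ be a finite abelian group. Then there exist a natural number k and positive integers d_1, …, d_k such that the rational group algebra ℚ[Γ] is isomorphic, as a ℚ-algebra, to the direct product of cyclotomic fields ℚ(ζ_{d_1}) × ⋯ × ℚ(ζ_{d_k}), where ζ_d denotes a primitive d-th root of unity. -/

import Mathlib

/-!
For a field `K` in which `|Γ|` is invertible, `K[Γ]` is semisimple by Maschke's theorem, hence a
reduced Artinian ring, hence the product of its residue fields `K[Γ] ⧸ 𝔪`. Each residue field is
generated over `K` by the image of `Γ`, a finite subgroup of its units; this subgroup is cyclic of
some order `d`, so its generator is a primitive `d`-th root of unity and every element of the image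
is a `d`-th root of unity. The residue field is therefore the `d`-th cyclotomic extension of `K`.
-/

open MonoidAlgebra

theorem isCyclotomicExtension_card_range_of_adjoin_eq_top {K L G : Type*} [CommRing K]
    [CommRing L] [IsDomain L] [Algebra K L] [Group G] [Finite G] (φ : G →* Lˣ)
    (hφ : Algebra.adjoin K (Set.range fun g ↦ (φ g : L)) = ⊤) :
    IsCyclotomicExtension {Nat.card φ.range} K L := by
  have : Finite φ.range := .of_surjective _ φ.rangeRestrict_surjective
  rw [IsCyclotomicExtension.iff_adjoin_eq_top]
  refine ⟨?_, ?_⟩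
  · rintro n rfl -
    obtain ⟨g, hg⟩ := IsCyclic.exists_ofOrder_eq_natCard (α := φ.range)
    refine ⟨((g : Lˣ) : L), ?_⟩
    rw [IsPrimitiveRoot.coe_units_iff, IsPrimitiveRoot.coe_submonoidClass_iff, ← hg]
    exact IsPrimitiveRoot.orderOf g
  · rw [eq_top_iff, ← hφ]
    refine Algebra.adjoin_mono ?_
    rintro _ ⟨g, rfl⟩
    refine ⟨_, rfl, Nat.card_pos.ne', ?_⟩
    have : (⟨φ g, g, rfl⟩ : φ.range) ^ Nat.card φ.range = 1 := pow_card_eq_one'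
    rw [← Units.val_pow_eq_pow_val, ← Units.val_one]
    exact congrArg (fun u : φ.range ↦ ((u : Lˣ) : L)) this

theorem Algebra.adjoin_range_comp_eq_top_of_surjective {R A B ι : Type*} [CommSemiring R]
    [Semiring A] [Semiring B] [Algebra R A] [Algebra R B] {f : A →ₐ[R] B}
    (hf : Function.Surjective f) {v : ι → A} (hv : Algebra.adjoin R (Set.range v) = ⊤) :
    Algebra.adjoin R (Set.range (f ∘ v)) = ⊤ := by
  rw [Set.range_comp, Algebra.adjoin_image, hv, Algebra.map_top, AlgHom.range_eq_top]
  exact hf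

theorem MonoidAlgebra.adjoin_range_of (k G : Type*) [CommSemiring k] [Monoid G] :
    Algebra.adjoin k (Set.range (of k G)) = ⊤ :=
  eq_top_iff.2 fun f _ ↦
    Algebra.adjoin_mono (Set.image_subset_range _ _) (mem_adjoin_support f)

theorem MonoidAlgebra.exists_algEquiv_cyclotomicField_quotient (K Γ : Type*) [Field K]
    [CommGroup Γ] [Finite Γ] [NeZero (Nat.card Γ : K)] (I : Ideal (MonoidAlgebra K Γ))
    [I.IsMaximal] :
    ∃ d : ℕ+, Nonempty ((MonoidAlgebra K Γ ⧸ I) ≃ₐ[K] CyclotomicField d K) := by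
  let : Field (MonoidAlgebra K Γ ⧸ I) := Ideal.Quotient.field I
  let φ : Γ →* (MonoidAlgebra K Γ ⧸ I)ˣ :=
    ((Ideal.Quotient.mkₐ K I : MonoidAlgebra K Γ →* _).comp (of K Γ)).toHomUnits
  have hφ : Algebra.adjoin K (Set.range fun g ↦ (φ g : MonoidAlgebra K Γ ⧸ I)) = ⊤ :=
    Algebra.adjoin_range_comp_eq_top_of_surjective (Ideal.Quotient.mkₐ_surjective K I)
      (adjoin_range_of K Γ)
  have : Finite φ.range := .of_surjective _ φ.rangeRestrict_surjective
  let d : ℕ+ := ⟨Nat.card φ.range, Nat.card_pos⟩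
  have : IsCyclotomicExtension {(d : ℕ)} K (MonoidAlgebra K Γ ⧸ I) :=
    isCyclotomicExtension_card_range_of_adjoin_eq_top φ hφ
  have : NeZero ((d : ℕ) : K) :=
    ⟨ne_zero_of_dvd_ne_zero (NeZero.ne _) (Nat.cast_dvd_cast (Subgroup.card_range_dvd φ))⟩
  exact ⟨d, ⟨IsCyclotomicExtension.algEquiv {(d : ℕ)} K _ (CyclotomicField d K)⟩⟩

theorem MonoidAlgebra.exists_algEquiv_pi_cyclotomicField (K Γ : Type*) [Field K]
    [CommGroup Γ] [Finite Γ] [NeZero (Nat.card Γ : K)] :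
    ∃ (k : ℕ) (d : Fin k → ℕ+),
      Nonempty (MonoidAlgebra K Γ ≃ₐ[K] ∀ i : Fin k, CyclotomicField (d i) K) := by
  choose d e using fun m : MaximalSpectrum (MonoidAlgebra K Γ) ↦
    exists_algEquiv_cyclotomicField_quotient K Γ m.asIdeal
  have : Fintype (MaximalSpectrum (MonoidAlgebra K Γ)) := Fintype.ofFinite _
  let σ := Fintype.equivFin (MaximalSpectrum (MonoidAlgebra K Γ))
  exact ⟨_, d ∘ σ.symm, ⟨((IsArtinianRing.equivPi _).restrictScalars K).trans <|
    (AlgEquiv.piCongrRight fun m ↦ (e m).some).trans (AlgEquiv.piCongrLeft' K _ σ)⟩⟩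

/-- The rational group algebra of a finite abelian group is isomorphic, as a
`ℚ`-algebra, to a finite direct product of cyclotomic fields. -/
theorem rat_groupAlgebra_of_finite_abelian_iso_pi_cyclotomic
    (Γ : Type*) [CommGroup Γ] [Finite Γ] :
    ∃ (k : ℕ) (d : Fin k → ℕ+),
      Nonempty (MonoidAlgebra ℚ Γ ≃ₐ[ℚ] ∀ i : Fin k, CyclotomicField (d i) ℚ) :=
  have : NeZero (Nat.card Γ : ℚ) := ⟨Nat.cast_ne_zero.2 Nat.card_pos.ne'⟩
  exists_algEquiv_pi_cyclotomicField ℚ Γ
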